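/- If the point x ∈ Σ is unreachable, then Γ^{opt}[x] has the closed graph property: for every sequence x_n ∈ Σ with x_n → x and every sequence of optimal trajectories (y_n,α_n) ∈ Γ^{opt}[x_n] such that y_n converges uniformly on [0,T] to a curve y, there exists a measurable α such that (y,α) ∈ Γ^{opt}[x]. -/

import Mathlib

open MeasureTheory Set Filter Topology

noncomputable section

/-- Squared Euclidean norm on ℝ². -/
def sq2 (v : ℝ × ℝ) : ℝ := v.1 ^ 2 + v.2 ^ 2

/-- Euclidean norm on ℝ². -/
def enorm2 (v : ℝ × ℝ) : ℝ := Real.sqrt (sq2 v)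

/-- `(y, α)` is an admissible trajectory for the Grushin-type dynamics on `[t,T]`,
starting from `x` and constrained to the set `S`:  `y ∈ W^{1,1}`, `α` measurable,
`y₁' = α₁`, `y₂' = |y₁|^ν α₂` a.e. (in integral form), `y(t) = x`, `y(s) ∈ S`. -/
def Admissible (ν : ℝ) (S : Set (ℝ × ℝ)) (t T : ℝ) (x : ℝ × ℝ)
    (y α : ℝ → ℝ × ℝ) : Prop :=
  Measurable α ∧
  IntervalIntegrable (fun τ => (α τ).1) volume t T ∧
  IntervalIntegrable (fun τ => |(y τ).1| ^ ν * (α τ).2) volume t T ∧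
  (∀ s ∈ Icc t T, (y s).1 = x.1 + ∫ τ in t..s, (α τ).1) ∧
  (∀ s ∈ Icc t T, (y s).2 = x.2 + ∫ τ in t..s, |(y τ).1| ^ ν * (α τ).2) ∧
  (∀ s ∈ Icc t T, y s ∈ S)

/-- `α ∈ L²(t,T)`. -/
def InL2 (α : ℝ → ℝ × ℝ) (t T : ℝ) : Prop :=
  IntervalIntegrable (fun τ => sq2 (α τ)) volume t T

/-- The cost `J_t(x;(y,α))`. -/
def cost (l : ℝ × ℝ → ℝ → ℝ) (g : ℝ × ℝ → ℝ) (t T : ℝ) (y α : ℝ → ℝ × ℝ) : ℝ :=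
  (∫ τ in t..T, (sq2 (α τ) / 2 + l (y τ) τ)) + g (y T)

/-- `Γ_t[x]`: admissible trajectories from `(x,t)` with finite cost (`α ∈ L²`). -/
def Gamma (ν : ℝ) (S : Set (ℝ × ℝ)) (t T : ℝ) (x : ℝ × ℝ) :
    Set ((ℝ → ℝ × ℝ) × (ℝ → ℝ × ℝ)) :=
  {p | Admissible ν S t T x p.1 p.2 ∧ InL2 p.2 t T}

/-- `Γ_t^{opt}[x]`: optimal trajectories. -/
def GammaOpt (ν : ℝ) (S : Set (ℝ × ℝ)) (l : ℝ × ℝ → ℝ → ℝ) (g : ℝ × ℝ → ℝ)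
    (t T : ℝ) (x : ℝ × ℝ) : Set ((ℝ → ℝ × ℝ) × (ℝ → ℝ × ℝ)) :=
  {p | p ∈ Gamma ν S t T x ∧
    ∀ q ∈ Gamma ν S t T x, cost l g t T p.1 p.2 ≤ cost l g t T q.1 q.2}

/-- The value function `u(x,t)`. -/
def valueFun (ν : ℝ) (S : Set (ℝ × ℝ)) (l : ℝ × ℝ → ℝ → ℝ) (g : ℝ × ℝ → ℝ)
    (T : ℝ) (x : ℝ × ℝ) (t : ℝ) : ℝ :=
  sInf ((fun p => cost l g t T p.1 p.2) '' Gamma ν S t T x)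

/-- Closed graph property of `Γ_t^{opt}[x]`. -/
def ClosedGraphAt (ν : ℝ) (S : Set (ℝ × ℝ)) (l : ℝ × ℝ → ℝ → ℝ) (g : ℝ × ℝ → ℝ)
    (t T : ℝ) (x : ℝ × ℝ) : Prop :=
  ∀ (xs : ℕ → ℝ × ℝ) (ys as : ℕ → ℝ → ℝ × ℝ) (y : ℝ → ℝ × ℝ),
    (∀ n, xs n ∈ S) → Tendsto xs atTop (𝓝 x) →
    (∀ n, (ys n, as n) ∈ GammaOpt ν S l g t T (xs n)) →
    TendstoUniformlyOn ys y atTop (Icc t T) →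
    ∃ α, (y, α) ∈ GammaOpt ν S l g t T x

/-- Approximation property at `x` for initial time `t`. -/
def ApproxProperty (ν : ℝ) (S : Set (ℝ × ℝ)) (l : ℝ × ℝ → ℝ → ℝ) (g : ℝ × ℝ → ℝ)
    (t T : ℝ) (x : ℝ × ℝ) : Prop :=
  ∀ y α, (y, α) ∈ Gamma ν S t T x →
    ∀ xs : ℕ → ℝ × ℝ, (∀ n, xs n ∈ S) → Tendsto xs atTop (𝓝 x) →
      ∃ ys as : ℕ → ℝ → ℝ × ℝ,
        (∀ n, (ys n, as n) ∈ Gamma ν S t T (xs n)) ∧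
        TendstoUniformlyOn ys y atTop (Icc t T) ∧
        Tendsto (fun n => (∫ τ in t..T, sq2 (as n τ)) - ∫ τ in t..T, sq2 (α τ))
          atTop (𝓝 0) ∧
        Tendsto (fun n => cost l g t T (ys n) (as n)) atTop (𝓝 (cost l g t T y α))

/-- The point `x` is unreachable: no admissible trajectory with finite cost,
starting from another point of `S`, reaches `x` at time `T`. -/
def Unreachable (ν : ℝ) (S : Set (ℝ × ℝ)) (T : ℝ) (x : ℝ × ℝ) : Prop :=
  ∀ xb ∈ S \ {x}, ¬ ∃ p ∈ Gamma ν S 0 T xb, p.1 T = x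

/-- Reachability property of the dynamics at `x`. -/
def ReachProperty (ν : ℝ) (S : Set (ℝ × ℝ)) (T : ℝ) (x : ℝ × ℝ) : Prop :=
  ∀ xs : ℕ → ℝ × ℝ, (∀ n, xs n ∈ S) → Tendsto xs atTop (𝓝 x) →
    ∃ (δ : ℕ → ℝ) (ys as : ℕ → ℝ → ℝ × ℝ),
      (∀ n, δ n ∈ Icc 0 T) ∧
      (∀ n, Admissible ν S 0 (δ n) (xs n) (ys n) (as n) ∧ InL2 (as n) 0 (δ n) ∧
        ys n (δ n) = x) ∧
      Tendsto (fun n => ∫ τ in (0:ℝ)..(δ n), sq2 (as n τ)) atTop (𝓝 0) ∧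
      Tendsto δ atTop (𝓝 0)

/-- `x₁`-convexity of a subset of the plane. -/
def X1Convex (A : Set (ℝ × ℝ)) : Prop :=
  ∀ a b h : ℝ, (a, b) ∈ A → 0 < h → (a + h, b) ∈ A →
    ∀ t ∈ Icc (0:ℝ) 1, (a + t * h, b) ∈ A

/-- Hypothesis (H1). -/
def HypH1 (S : Set (ℝ × ℝ)) : Prop :=
  ∀ x0 ∈ frontier S, x0.1 ≠ 0 →
    ∃ R > 0, X1Convex (S ∩ Metric.ball x0 R) ∧
      ((S ∩ Metric.ball x0 R ∩ {p | x0.2 < p.2}).Nonempty →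
        ∃ C > 0,
          {p : ℝ × ℝ | p.1 = x0.1 ∧ p.2 ∈ Ioc x0.2 (x0.2 + R)} ⊆ S ∨
          {p : ℝ × ℝ | p.1 ∈ Ioc x0.1 (x0.1 + R) ∧ p.2 = x0.2 + C * (p.1 - x0.1)} ⊆ S ∨
          {p : ℝ × ℝ | p.1 ∈ Ico (x0.1 - R) x0.1 ∧ p.2 = x0.2 + C * (x0.1 - p.1)} ⊆ S) ∧
      ((S ∩ Metric.ball x0 R ∩ {p | p.2 < x0.2}).Nonempty →
        ∃ C > 0,
          {p : ℝ × ℝ | p.1 = x0.1 ∧ p.2 ∈ Ico (x0.2 - R) x0.2} ⊆ S ∨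
          {p : ℝ × ℝ | p.1 ∈ Ioc x0.1 (x0.1 + R) ∧ p.2 = x0.2 - C * (p.1 - x0.1)} ⊆ S ∨
          {p : ℝ × ℝ | p.1 ∈ Ico (x0.1 - R) x0.1 ∧ p.2 = x0.2 - C * (x0.1 - p.1)} ⊆ S)

/-- Hypothesis (H2). -/
def HypH2 (ν : ℝ) (S : Set (ℝ × ℝ)) : Prop :=
  ∀ x0 ∈ frontier S, x0.1 = 0 →
    ∃ R > 0, X1Convex (S ∩ Metric.ball x0 R) ∧
      ((S ∩ Metric.ball x0 R ∩ {p | x0.2 < p.2}).Nonempty →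
        ∃ C > 0,
          {p : ℝ × ℝ | p.1 ∈ Ioc 0 R ∧ p.2 = x0.2 + C * p.1 ^ (ν + 1)} ⊆ S ∨
          {p : ℝ × ℝ | p.1 ∈ Ico (-R) 0 ∧ p.2 = x0.2 + C * (-p.1) ^ (ν + 1)} ⊆ S) ∧
      ((S ∩ Metric.ball x0 R ∩ {p | p.2 < x0.2}).Nonempty →
        ∃ C > 0,
          {p : ℝ × ℝ | p.1 ∈ Ioc 0 R ∧ p.2 = x0.2 - C * p.1 ^ (ν + 1)} ⊆ S ∨
          {p : ℝ × ℝ | p.1 ∈ Ico (-R) 0 ∧ p.2 = x0.2 - C * (-p.1) ^ (ν + 1)} ⊆ S)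

/-!
Unreachability forces every finite-energy trajectory from `x` to rest at `x`: if `y u ≠ x`, running
`y` backwards from time `u` and then resting at `x` is a trajectory from `y u` that reaches `x` at
time `T`. It therefore suffices to show that the uniform limit `y` of optimal trajectories is itself
a finite-energy trajectory from `x`. Comparison with the resting trajectory bounds the energies of
the optimal controls uniformly, so a subsequence of the controls converges weakly in `L²(0,T)`;
as the weights `|yₙ₁|^ν` converge uniformly, the integral form of the dynamics passes to the limit.
-/

open scoped RealInnerProductSpace ENNReal

section Hilbert

variable {H : Type*} [NormedAddCommGroup H] [InnerProductSpace ℝ H]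

theorem exists_subseq_weak_tendsto [CompleteSpace H] [TopologicalSpace.SeparableSpace H]
    {v : ℕ → H} {C : ℝ} (hv : ∀ n, ‖v n‖ ≤ C) :
    ∃ z : H, ∃ φ : ℕ → ℕ, StrictMono φ ∧
      ∀ w, Tendsto (fun n => ⟪v (φ n), w⟫) atTop (𝓝 ⟪z, w⟫) := by
  let f : ℕ → WeakDual ℝ H := fun n => StrongDual.toWeakDual (InnerProductSpace.toDual ℝ H (v n))
  have hf : ∀ n, f n ∈ WeakDual.toStrongDual ⁻¹' Metric.closedBall 0 C := fun n => by
    simpa [f] using hv n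
  obtain ⟨L, -, φ, hφ, hlim⟩ := WeakDual.isSeqCompact_closedBall ℝ H 0 C hf
  refine ⟨(InnerProductSpace.toDual ℝ H).symm (WeakDual.toStrongDual L), φ, hφ, fun w => ?_⟩
  rw [InnerProductSpace.toDual_symm_apply]
  exact ((WeakDual.eval_continuous w).tendsto L).comp hlim

theorem tendsto_inner_of_tendsto_of_weak {u : ℕ → H} {u₀ : H} (hu : Tendsto u atTop (𝓝 u₀))
    {v : ℕ → H} {z : H} (hv : ∀ w, Tendsto (fun n => ⟪v n, w⟫) atTop (𝓝 ⟪z, w⟫))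
    {C : ℝ} (hC : ∀ n, ‖v n‖ ≤ C) :
    Tendsto (fun n => ⟪u n, v n⟫) atTop (𝓝 ⟪u₀, z⟫) := by
  have hdiff : Tendsto (fun n => ⟪u n - u₀, v n⟫) atTop (𝓝 0) := by
    refine squeeze_zero_norm (fun n => (norm_inner_le_norm _ _).trans
      (mul_le_mul_of_nonneg_left (hC n) (norm_nonneg _))) ?_
    simpa using (tendsto_iff_norm_sub_tendsto_zero.mp hu).mul_const C
  have hfix : Tendsto (fun n => ⟪u₀, v n⟫) atTop (𝓝 ⟪u₀, z⟫) := by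
    simpa only [real_inner_comm u₀] using hv u₀
  simpa [inner_sub_left] using hdiff.add hfix

end Hilbert

section L2

variable {X : Type*} [MeasurableSpace X] {μ : Measure X}

theorem inner_toLp_eq_integral {f : X → ℝ} (hf : MemLp f 2 μ) (g : Lp ℝ 2 μ) :
    ⟪hf.toLp f, g⟫ = ∫ x, f x * g x ∂μ := by
  rw [MeasureTheory.L2.inner_def]
  refine integral_congr_ae ?_
  filter_upwards [hf.coeFn_toLp] with x hx
  simp [hx, mul_comm]

theorem norm_toLp_le_sqrt_of_integral_sq_le {f : X → ℝ} (hf : MemLp f 2 μ) {K : ℝ}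
    (hK : ∫ x, f x ^ 2 ∂μ ≤ K) : ‖hf.toLp f‖ ≤ Real.sqrt K := by
  have hsq : ‖hf.toLp f‖ ^ 2 = ∫ x, f x ^ 2 ∂μ := by
    rw [← real_inner_self_eq_norm_sq, inner_toLp_eq_integral]
    refine integral_congr_ae ?_
    filter_upwards [hf.coeFn_toLp] with x hx
    rw [hx, sq]
  rw [← Real.sqrt_sq (norm_nonneg _), hsq]
  exact Real.sqrt_le_sqrt hK

theorem tendsto_toLp_of_tendstoUniformlyOn {E : Type*} [NormedAddCommGroup E] {p : ℝ≥0∞}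
    [Fact (1 ≤ p)] [IsFiniteMeasure μ] {c : ℕ → X → E} {c₀ : X → E} (hc : ∀ n, MemLp (c n) p μ)
    (hc₀ : MemLp c₀ p μ) {s : Set X} (hs : ∀ᵐ x ∂μ, x ∈ s)
    (hconv : TendstoUniformlyOn c c₀ atTop s) :
    Tendsto (fun n => (hc n).toLp (c n)) atTop (𝓝 (hc₀.toLp c₀)) := by
  set C : ℝ := (measureUnivNNReal μ : ℝ) ^ p.toReal⁻¹
  have hC : 0 ≤ C := by positivity
  rw [tendsto_iff_norm_sub_tendsto_zero, Metric.tendsto_nhds]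
  intro ε hε
  have hδ : 0 < ε / (C + 1) := by positivity
  filter_upwards [Metric.tendstoUniformlyOn_iff.mp hconv _ hδ] with n hn
  have hbound : ‖(hc n).toLp (c n) - hc₀.toLp c₀‖ ≤ C * (ε / (C + 1)) := by
    rw [← MemLp.toLp_sub]
    refine Lp.norm_le_of_ae_bound hδ.le ?_
    filter_upwards [((hc n).sub hc₀).coeFn_toLp, hs] with x hx hxs
    rw [hx, Pi.sub_apply, ← dist_eq_norm, dist_comm]
    exact (hn x hxs).le
  have hlt : C * (ε / (C + 1)) < ε := by
    rw [mul_div_assoc', div_lt_iff₀ (by positivity)]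
    nlinarith
  rw [Real.dist_0_eq_abs, abs_norm]
  exact hbound.trans_lt hlt

end L2

theorem ContinuousOn.memLp_restrict_Ioc {f : ℝ → ℝ} {T : ℝ} (hf : ContinuousOn f (Icc 0 T))
    (p : ℝ≥0∞) : MemLp f p (volume.restrict (Ioc 0 T)) := by
  obtain ⟨M, hM⟩ := isCompact_Icc.exists_bound_of_continuousOn hf
  refine MemLp.of_bound ((hf.mono Ioc_subset_Icc_self).aestronglyMeasurable measurableSet_Ioc) M ?_
  exact ae_restrict_of_forall_mem measurableSet_Ioc fun τ hτ => hM τ (Ioc_subset_Icc_self hτ)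

theorem integral_indicator_Ioc_mul {T s : ℝ} (hs : s ∈ Icc 0 T) (f g : ℝ → ℝ) :
    ∫ τ, (Ioc 0 s).indicator f τ * g τ ∂(volume.restrict (Ioc 0 T)) = ∫ τ in 0..s, f τ * g τ := by
  simp_rw [← indicator_mul_left]
  rw [integral_indicator measurableSet_Ioc, Measure.restrict_restrict measurableSet_Ioc,
    Ioc_inter_Ioc, max_self, min_eq_left hs.2, intervalIntegral.integral_of_le hs.1]

theorem tendsto_intervalIntegral_mul_of_weak {T : ℝ} {a : ℕ → ℝ → ℝ}
    (ha : ∀ n, MemLp (a n) 2 (volume.restrict (Ioc 0 T)))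
    {z : Lp ℝ 2 (volume.restrict (Ioc 0 T))}
    (hweak : ∀ w, Tendsto (fun n => ⟪(ha n).toLp (a n), w⟫) atTop (𝓝 ⟪z, w⟫))
    {C : ℝ} (hC : ∀ n, ‖(ha n).toLp (a n)‖ ≤ C)
    {c : ℕ → ℝ → ℝ} {c₀ : ℝ → ℝ} (hc : ∀ n, ContinuousOn (c n) (Icc 0 T))
    (hc₀ : ContinuousOn c₀ (Icc 0 T)) (hconv : TendstoUniformlyOn c c₀ atTop (Icc 0 T))
    {s : ℝ} (hs : s ∈ Icc 0 T) :
    Tendsto (fun n => ∫ τ in 0..s, c n τ * a n τ) atTop (𝓝 (∫ τ in 0..s, c₀ τ * z τ)) := by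
  have hW : ∀ n, MemLp ((Ioc 0 s).indicator (c n)) 2 (volume.restrict (Ioc 0 T)) := fun n =>
    ((hc n).memLp_restrict_Ioc 2).indicator measurableSet_Ioc
  have hW₀ : MemLp ((Ioc 0 s).indicator c₀) 2 (volume.restrict (Ioc 0 T)) :=
    (hc₀.memLp_restrict_Ioc 2).indicator measurableSet_Ioc
  have hWconv : TendstoUniformlyOn (fun n => (Ioc 0 s).indicator (c n)) ((Ioc 0 s).indicator c₀)
      atTop (Icc 0 T) := by
    rw [Metric.tendstoUniformlyOn_iff] at hconv ⊢
    intro ε hε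
    filter_upwards [hconv ε hε] with n hn τ hτ
    by_cases hτs : τ ∈ Ioc 0 s
    · simpa [indicator_of_mem hτs] using hn τ hτ
    · simpa [indicator_of_notMem hτs] using hε
  have hlim := tendsto_inner_of_tendsto_of_weak
    (tendsto_toLp_of_tendstoUniformlyOn hW hW₀
      (ae_restrict_of_forall_mem measurableSet_Ioc fun _ h => Ioc_subset_Icc_self h) hWconv)
    hweak hC
  have hseq : ∀ n, ⟪(hW n).toLp _, (ha n).toLp (a n)⟫ = ∫ τ in 0..s, c n τ * a n τ := by
    intro n
    rw [inner_toLp_eq_integral, ← integral_indicator_Ioc_mul hs]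
    refine integral_congr_ae ?_
    filter_upwards [(ha n).coeFn_toLp] with τ hτ
    rw [hτ]
  rw [inner_toLp_eq_integral, integral_indicator_Ioc_mul hs] at hlim
  simpa only [hseq] using hlim

theorem UniformContinuousOn.comp_tendstoUniformlyOn {ι α β γ : Type*} [PseudoMetricSpace β]
    [PseudoMetricSpace γ] {f : β → γ} {K : Set β} (hf : UniformContinuousOn f K)
    {l : Filter ι} {F : ι → α → β} {F₀ : α → β} {s : Set α} (hF : ∀ i, MapsTo (F i) s K)
    (hF₀ : MapsTo F₀ s K) (h : TendstoUniformlyOn F F₀ l s) :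
    TendstoUniformlyOn (fun i a => f (F i a)) (fun a => f (F₀ a)) l s := by
  rw [Metric.tendstoUniformlyOn_iff] at h ⊢
  intro ε hε
  obtain ⟨δ, hδ, hfδ⟩ := Metric.uniformContinuousOn_iff.mp hf ε hε
  filter_upwards [h δ hδ] with i hi a ha
  exact hfδ _ (hF₀ ha) _ (hF i ha) (hi a ha)

theorem sq2_nonneg (v : ℝ × ℝ) : 0 ≤ sq2 v := add_nonneg (sq_nonneg _) (sq_nonneg _)

@[simp] theorem sq2_zero : sq2 0 = 0 := by simp [sq2]

section Trajectory

variable {ν t T : ℝ} {S : Set (ℝ × ℝ)} {x : ℝ × ℝ} {y α : ℝ → ℝ × ℝ}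

theorem Admissible.apply_left (htT : t ≤ T) (h : Admissible ν S t T x y α) : y t = x := by
  obtain ⟨-, -, -, h₁, h₂, -⟩ := h
  ext
  · simpa using h₁ t (left_mem_Icc.mpr htT)
  · simpa using h₂ t (left_mem_Icc.mpr htT)

theorem Admissible.continuousOn (htT : t ≤ T) (h : Admissible ν S t T x y α) :
    ContinuousOn y (Icc t T) := by
  obtain ⟨-, hi₁, hi₂, h₁, h₂, -⟩ := h
  have hprim : ∀ {f : ℝ → ℝ}, IntervalIntegrable f volume t T →
      ContinuousOn (fun s => ∫ τ in t..s, f τ) (Icc t T) := fun hf => by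
    simpa [uIcc_of_le htT] using intervalIntegral.continuousOn_primitive_interval' hf
      (by simpa [uIcc_of_le htT] using htT)
  exact ((continuousOn_const.add (hprim hi₁)).prodMk (continuousOn_const.add (hprim hi₂))).congr
    fun s hs => Prod.ext (h₁ s hs) (h₂ s hs)

theorem Admissible.fst_sub (h : Admissible ν S t T x y α) {s : ℝ} (hs : s ∈ Icc t T) :
    (y s - x).1 = ∫ τ in t..s, (α τ).1 := by
  rw [Prod.fst_sub, h.2.2.2.1 s hs, add_sub_cancel_left]

theorem Admissible.snd_sub (h : Admissible ν S t T x y α) {s : ℝ} (hs : s ∈ Icc t T) :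
    (y s - x).2 = ∫ τ in t..s, |(y τ).1| ^ ν * (α τ).2 := by
  rw [Prod.snd_sub, h.2.2.2.2.1 s hs, add_sub_cancel_left]

theorem mem_Gamma_zero_of_eqOn (hx : x ∈ S) (hy : EqOn y (fun _ => x) (Icc t T)) :
    (y, fun _ => (0 : ℝ × ℝ)) ∈ Gamma ν S t T x := by
  refine ⟨⟨measurable_const, ?_, ?_, fun s hs => ?_, fun s hs => ?_, fun s hs => ?_⟩, ?_⟩ <;>
    simp [InL2, sq2, hy _, *]

theorem intervalIntegrable_runningCost {l : ℝ × ℝ → ℝ → ℝ}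
    (hl : ContinuousOn (fun q : (ℝ × ℝ) × ℝ => l q.1 q.2) (S ×ˢ Icc t T)) (htT : t ≤ T)
    (h : Admissible ν S t T x y α) : IntervalIntegrable (fun τ => l (y τ) τ) volume t T := by
  refine ContinuousOn.intervalIntegrable ?_
  rw [uIcc_of_le htT]
  exact hl.comp ((h.continuousOn htT).prodMk continuousOn_id) fun τ hτ => ⟨h.2.2.2.2.2 τ hτ, hτ⟩

end Trajectory

section Cost

variable {ν t T : ℝ} {S : Set (ℝ × ℝ)} {x : ℝ × ℝ} {l : ℝ × ℝ → ℝ → ℝ} {g : ℝ × ℝ → ℝ}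
  {M Mg : ℝ}

theorem cost_eq {y α : ℝ → ℝ × ℝ} (hα : InL2 α t T)
    (hl : IntervalIntegrable (fun τ => l (y τ) τ) volume t T) :
    cost l g t T y α = (∫ τ in t..T, sq2 (α τ)) / 2 + (∫ τ in t..T, l (y τ) τ) + g (y T) := by
  rw [cost, intervalIntegral.integral_add (hα.div_const 2) hl, intervalIntegral.integral_div]

theorem abs_cost_sub_energy_le (htT : t ≤ T)
    (hl : ContinuousOn (fun q : (ℝ × ℝ) × ℝ => l q.1 q.2) (S ×ˢ Icc t T))
    (hM : ∀ q ∈ S ×ˢ Icc t T, ‖l q.1 q.2‖ ≤ M) (hMg : ∀ z ∈ S, ‖g z‖ ≤ Mg)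
    {p : (ℝ → ℝ × ℝ) × (ℝ → ℝ × ℝ)} (hp : p ∈ Gamma ν S t T x) :
    |cost l g t T p.1 p.2 - (∫ τ in t..T, sq2 (p.2 τ)) / 2| ≤ M * (T - t) + Mg := by
  have hS := hp.1.2.2.2.2.2
  have hrun : ‖∫ τ in t..T, l (p.1 τ) τ‖ ≤ M * |T - t| :=
    intervalIntegral.norm_integral_le_of_norm_le_const fun τ hτ => by
      rw [uIoc_of_le htT] at hτ
      exact hM (p.1 τ, τ) ⟨hS τ (Ioc_subset_Icc_self hτ), Ioc_subset_Icc_self hτ⟩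
  rw [abs_of_nonneg (sub_nonneg.mpr htT)] at hrun
  rw [cost_eq hp.2 (intervalIntegrable_runningCost hl htT hp.1), add_assoc, add_sub_cancel_left]
  exact (abs_add_le _ _).trans (add_le_add hrun (hMg _ (hS T (right_mem_Icc.mpr htT))))

theorem integral_sq2_le_of_mem_GammaOpt (htT : t ≤ T)
    (hl : ContinuousOn (fun q : (ℝ × ℝ) × ℝ => l q.1 q.2) (S ×ˢ Icc t T))
    (hM : ∀ q ∈ S ×ˢ Icc t T, ‖l q.1 q.2‖ ≤ M) (hMg : ∀ z ∈ S, ‖g z‖ ≤ Mg) (hx : x ∈ S)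
    {p : (ℝ → ℝ × ℝ) × (ℝ → ℝ × ℝ)} (hp : p ∈ GammaOpt ν S l g t T x) :
    ∫ τ in t..T, sq2 (p.2 τ) ≤ 4 * (M * (T - t) + Mg) := by
  have hrest : ((fun _ => x, fun _ => 0) : (ℝ → ℝ × ℝ) × (ℝ → ℝ × ℝ)) ∈ Gamma ν S t T x :=
    mem_Gamma_zero_of_eqOn hx fun _ _ => rfl
  have h₁ := abs_le.mp (abs_cost_sub_energy_le htT hl hM hMg hp.1)
  have h₂ := abs_le.mp (abs_cost_sub_energy_le htT hl hM hMg hrest)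
  have hopt := hp.2 _ hrest
  simp only [sq2_zero, intervalIntegral.integral_zero, zero_div, sub_zero] at h₂
  linarith

end Cost

/-- The control of `s ↦ y (u - min s u)`, which runs `y` backwards from time `u` and then rests. -/
def reverseControl {E : Type*} [Neg E] [Zero E] (u : ℝ) (f : ℝ → E) : ℝ → E :=
  fun s => if s ≤ u then -f (u - s) else 0

section Reversal

variable {u : ℝ}

theorem reverseControl_of_le {E : Type*} [Neg E] [Zero E] {f : ℝ → E} {s : ℝ} (hs : s ≤ u) :
    reverseControl u f s = -f (u - s) := if_pos hs

theorem reverseControl_of_lt {E : Type*} [Neg E] [Zero E] {f : ℝ → E} {s : ℝ} (hs : u < s) :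
    reverseControl u f s = 0 := if_neg hs.not_ge

variable {f : ℝ → ℝ}

theorem intervalIntegrable_reverseControl (hu : 0 ≤ u) (hf : IntervalIntegrable f volume 0 u)
    {s : ℝ} (hs : 0 ≤ s) :
    IntervalIntegrable (reverseControl u f) volume 0 s := by
  have h₀ : IntervalIntegrable (reverseControl u f) volume 0 u := by
    refine (by simpa [Pi.neg_def] using (hf.comp_sub_left u).symm.neg :
      IntervalIntegrable (fun τ => -f (u - τ)) volume 0 u).congr fun τ hτ => ?_
    rw [uIoc_of_le hu] at hτ
    exact (reverseControl_of_le hτ.2).symm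
  rcases le_total s u with hsu | hus
  · exact h₀.mono_set (uIcc_subset_uIcc_left (by simp [uIcc_of_le hu, hs, hsu]))
  · refine h₀.trans ((intervalIntegrable_const (c := (0:ℝ))).congr fun τ hτ => ?_)
    rw [uIoc_of_le hus] at hτ
    exact (reverseControl_of_lt hτ.1).symm

theorem integral_reverseControl (hu : 0 ≤ u) (hf : IntervalIntegrable f volume 0 u)
    {s : ℝ} (hs : 0 ≤ s) :
    ∫ τ in 0..s, reverseControl u f τ = (∫ τ in 0..(u - min s u), f τ) - ∫ τ in 0..u, f τ := by
  have hshort : ∀ r ∈ Icc 0 u,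
      ∫ τ in 0..r, reverseControl u f τ = (∫ τ in 0..(u - r), f τ) - ∫ τ in 0..u, f τ := by
    intro r hr
    have hsub : IntervalIntegrable f volume 0 (u - r) :=
      hf.mono_set (uIcc_subset_uIcc_left (by simp [uIcc_of_le hu, hr.1, hr.2]))
    rw [intervalIntegral.integral_congr (g := fun τ => -f (u - τ)) fun τ hτ =>
        reverseControl_of_le (by rw [uIcc_of_le hr.1] at hτ; exact hτ.2.trans hr.2),
      intervalIntegral.integral_neg, intervalIntegral.integral_comp_sub_left,
      intervalIntegral.integral_interval_sub_left hsub hf, sub_zero,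
      intervalIntegral.integral_symm, neg_neg]
  rcases le_total s u with hsu | hus
  · rw [min_eq_left hsu, hshort s ⟨hs, hsu⟩]
  · have htail : ∫ τ in u..s, reverseControl u f τ = 0 := by
      rw [intervalIntegral.integral_congr_ae (g := fun _ => (0:ℝ))
        (Eventually.of_forall fun τ hτ => reverseControl_of_lt (by
          rw [uIoc_of_le hus] at hτ; exact hτ.1))]
      simp
    rw [min_eq_right hus, ← intervalIntegral.integral_add_adjacent_intervals
      (intervalIntegrable_reverseControl hu hf hu)
      ((intervalIntegrable_reverseControl hu hf hu).symm.trans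
        (intervalIntegrable_reverseControl hu hf hs)),
      htail, add_zero, hshort u ⟨hu, le_rfl⟩]

variable {ν T : ℝ} {S : Set (ℝ × ℝ)} {x : ℝ × ℝ} {y α : ℝ → ℝ × ℝ}

theorem fst_reverseControl (s : ℝ) :
    (reverseControl u α s).1 = reverseControl u (fun τ => (α τ).1) s := by
  unfold reverseControl; split_ifs <;> rfl

/-- The sign makes `intervalIntegrable_reverseControl` applicable to the energy. -/
theorem sq2_reverseControl (s : ℝ) :
    sq2 (reverseControl u α s) = -reverseControl u (fun τ => sq2 (α τ)) s := by
  unfold reverseControl; split_ifs <;> simp [sq2]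

theorem weight_mul_snd_reverseControl (s : ℝ) :
    |(y (u - min s u)).1| ^ ν * (reverseControl u α s).2 =
      reverseControl u (fun τ => |(y τ).1| ^ ν * (α τ).2) s := by
  unfold reverseControl; split_ifs with h <;> simp [h]

theorem reverse_mem_Gamma (hp : (y, α) ∈ Gamma ν S 0 T x) (hu : u ∈ Icc 0 T) :
    (fun s => y (u - min s u), reverseControl u α) ∈ Gamma ν S 0 T (y u) := by
  obtain ⟨⟨hα, hi₁, hi₂, h₁, h₂, hS⟩, hL2⟩ := hp
  have hT : 0 ≤ T := hu.1.trans hu.2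
  have h0u : uIcc 0 u ⊆ uIcc 0 T := uIcc_subset_uIcc_left (by simp [uIcc_of_le hT, hu.1, hu.2])
  have hback : ∀ s ∈ Icc 0 T, u - min s u ∈ Icc 0 T := fun s hs =>
    ⟨sub_nonneg.mpr (min_le_right _ _), by linarith [hu.2, le_min hs.1 hu.1]⟩
  refine ⟨⟨?_, ?_, ?_, fun s hs => ?_, fun s hs => ?_, fun s hs => hS _ (hback s hs)⟩, ?_⟩
  · exact Measurable.ite measurableSet_Iic (hα.comp (measurable_const.sub measurable_id)).neg
      measurable_const
  · simp_rw [fst_reverseControl]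
    exact intervalIntegrable_reverseControl hu.1 (hi₁.mono_set h0u) hT
  · simp_rw [weight_mul_snd_reverseControl]
    exact intervalIntegrable_reverseControl hu.1 (hi₂.mono_set h0u) hT
  · simp_rw [fst_reverseControl]
    rw [integral_reverseControl hu.1 (hi₁.mono_set h0u) hs.1, h₁ _ (hback s hs), h₁ u hu]
    ring
  · simp_rw [weight_mul_snd_reverseControl]
    rw [integral_reverseControl hu.1 (hi₂.mono_set h0u) hs.1, h₂ _ (hback s hs), h₂ u hu]
    ring
  · unfold InL2
    simp_rw [sq2_reverseControl]
    exact (intervalIntegrable_reverseControl hu.1 (hL2.mono_set h0u) hT).neg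

end Reversal

section Unreachable

variable {ν T : ℝ} {S : Set (ℝ × ℝ)} {x : ℝ × ℝ}

theorem Unreachable.eqOn_of_mem_Gamma (hun : Unreachable ν S T x) (hT : 0 ≤ T)
    {p : (ℝ → ℝ × ℝ) × (ℝ → ℝ × ℝ)} (hp : p ∈ Gamma ν S 0 T x) :
    EqOn p.1 (fun _ => x) (Icc 0 T) := by
  intro u hu
  by_contra hne
  refine hun (p.1 u) ⟨hp.1.2.2.2.2.2 u hu, hne⟩ ⟨_, reverse_mem_Gamma hp hu, ?_⟩
  simp [min_eq_right hu.2, hp.1.apply_left hT]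

theorem Unreachable.mem_GammaOpt (hun : Unreachable ν S T x) (hT : 0 ≤ T) (hx : x ∈ S)
    {l : ℝ × ℝ → ℝ → ℝ} {g : ℝ × ℝ → ℝ}
    (hl : ContinuousOn (fun q : (ℝ × ℝ) × ℝ => l q.1 q.2) (S ×ˢ Icc 0 T))
    {y : ℝ → ℝ × ℝ} (hy : EqOn y (fun _ => x) (Icc 0 T)) :
    (y, fun _ => 0) ∈ GammaOpt ν S l g 0 T x := by
  have hrest := mem_Gamma_zero_of_eqOn (ν := ν) hx hy
  refine ⟨hrest, fun q hq => ?_⟩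
  have hqx := hun.eqOn_of_mem_Gamma hT hq
  have hsame : ∫ τ in 0..T, l (y τ) τ = ∫ τ in 0..T, l (q.1 τ) τ :=
    intervalIntegral.integral_congr fun τ hτ => by
      rw [uIcc_of_le hT] at hτ
      simp only [hy hτ, hqx hτ]
  have hend : g (y T) = g (q.1 T) := by
    rw [hy (right_mem_Icc.mpr hT), hqx (right_mem_Icc.mpr hT)]
  have henergy : 0 ≤ ∫ τ in 0..T, sq2 (q.2 τ) :=
    intervalIntegral.integral_nonneg hT fun τ _ => sq2_nonneg _
  rw [cost_eq hrest.2 (intervalIntegrable_runningCost hl hT hrest.1),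
    cost_eq hq.2 (intervalIntegrable_runningCost hl hT hq.1), hsame, hend]
  simp only [sq2_zero, intervalIntegral.integral_zero, zero_div, zero_add]
  linarith

end Unreachable

section Compactness

variable {ν T : ℝ} {S : Set (ℝ × ℝ)} {x : ℝ × ℝ}

theorem InL2.exists_memLp_of_sq_le {α : ℝ → ℝ × ℝ} (hT : 0 ≤ T) (hα : InL2 α 0 T) {K : ℝ}
    (hK : ∫ τ in 0..T, sq2 (α τ) ≤ K) {f : ℝ → ℝ} (hf : Measurable f)
    (hle : ∀ τ, f τ ^ 2 ≤ sq2 (α τ)) :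
    ∃ hf : MemLp f 2 (volume.restrict (Ioc 0 T)), ‖hf.toLp f‖ ≤ Real.sqrt K := by
  have hint := (intervalIntegrable_iff_integrableOn_Ioc_of_le hT).mp hα
  have hmem : MemLp f 2 (volume.restrict (Ioc 0 T)) :=
    (memLp_two_iff_integrable_sq hf.aestronglyMeasurable).mpr
      (hint.mono' (hf.pow_const 2).aestronglyMeasurable
        (Eventually.of_forall fun τ => by simpa using hle τ))
  refine ⟨hmem, norm_toLp_le_sqrt_of_integral_sq_le hmem ?_⟩
  rw [intervalIntegral.integral_of_le hT] at hK
  exact (integral_mono hmem.integrable_sq hint hle).trans hK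

theorem mem_Gamma_of_Lp (hν : 0 ≤ ν) (hT : 0 ≤ T) {y : ℝ → ℝ × ℝ}
    (hyc : ContinuousOn y (Icc 0 T)) (hyS : ∀ s ∈ Icc 0 T, y s ∈ S)
    (z₁ z₂ : Lp ℝ 2 (volume.restrict (Ioc 0 T)))
    (h₁ : ∀ s ∈ Icc 0 T, (y s).1 = x.1 + ∫ τ in 0..s, z₁ τ)
    (h₂ : ∀ s ∈ Icc 0 T, (y s).2 = x.2 + ∫ τ in 0..s, |(y τ).1| ^ ν * z₂ τ) :
    (y, fun τ => (z₁ τ, z₂ τ)) ∈ Gamma ν S 0 T x := by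
  have hint : ∀ z : Lp ℝ 2 (volume.restrict (Ioc 0 T)), IntervalIntegrable z volume 0 T :=
    fun z => (intervalIntegrable_iff_integrableOn_Ioc_of_le hT).mpr
      ((Lp.memLp z).integrable (by norm_num))
  have hweight : ContinuousOn (fun τ => |(y τ).1| ^ ν) (uIcc 0 T) := by
    rw [uIcc_of_le hT]
    exact ((Real.continuous_rpow_const hν).comp continuous_abs).comp_continuousOn
      (continuous_fst.comp_continuousOn hyc)
  refine ⟨⟨(Lp.stronglyMeasurable z₁).measurable.prodMk (Lp.stronglyMeasurable z₂).measurable,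
    hint z₁, (hint z₂).continuousOn_mul hweight, h₁, h₂, hyS⟩, ?_⟩
  exact (intervalIntegrable_iff_integrableOn_Ioc_of_le hT).mpr
    ((Lp.memLp z₁).integrable_sq.add (Lp.memLp z₂).integrable_sq)

theorem exists_mem_Gamma_of_tendstoUniformlyOn (hν : 0 ≤ ν) (hS : IsCompact S) (hT : 0 ≤ T)
    {xs : ℕ → ℝ × ℝ} (hxs : Tendsto xs atTop (𝓝 x)) {ys as : ℕ → ℝ → ℝ × ℝ}
    (hΓ : ∀ n, (ys n, as n) ∈ Gamma ν S 0 T (xs n)) {K : ℝ}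
    (hK : ∀ n, ∫ τ in 0..T, sq2 (as n τ) ≤ K) {y : ℝ → ℝ × ℝ}
    (hy : TendstoUniformlyOn ys y atTop (Icc 0 T)) :
    ∃ α, (y, α) ∈ Gamma ν S 0 T x := by
  have hys : ∀ n, ContinuousOn (ys n) (Icc 0 T) := fun n => (hΓ n).1.continuousOn hT
  have hysS : ∀ n, MapsTo (ys n) (Icc 0 T) S := fun n => (hΓ n).1.2.2.2.2.2
  have hyc : ContinuousOn y (Icc 0 T) := hy.continuousOn (Frequently.of_forall hys)
  have hyS : MapsTo y (Icc 0 T) S := fun s hs =>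
    hS.isClosed.mem_of_tendsto (hy.tendsto_at hs) (Eventually.of_forall fun n => hysS n hs)
  choose ha ha_le using fun n => (hΓ n).2.exists_memLp_of_sq_le hT (hK n)
    (f := fun τ => (as n τ).1) (measurable_fst.comp (hΓ n).1.1)
    fun τ => le_add_of_nonneg_right (sq_nonneg _)
  choose hb hb_le using fun n => (hΓ n).2.exists_memLp_of_sq_le hT (hK n)
    (f := fun τ => (as n τ).2) (measurable_snd.comp (hΓ n).1.1)
    fun τ => le_add_of_nonneg_left (sq_nonneg _)
  -- enables the instance `Lp.SecondCountableTopology`, so that `L²(0,T)` is separable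
  have : Fact ((2 : ℝ≥0∞) ≠ ∞) := ⟨ENNReal.ofNat_ne_top⟩
  obtain ⟨z₁, φ₁, hφ₁, hz₁⟩ := exists_subseq_weak_tendsto ha_le
  obtain ⟨z₂, φ₂, hφ₂, hz₂⟩ := exists_subseq_weak_tendsto fun n => hb_le (φ₁ n)
  set φ := φ₁ ∘ φ₂
  have hφ : Tendsto φ atTop atTop := (hφ₁.comp hφ₂).tendsto_atTop
  have hendpoint : ∀ s ∈ Icc 0 T,
      Tendsto (fun n => ys (φ n) s - xs (φ n)) atTop (𝓝 (y s - x)) := fun s hs =>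
    ((hy.tendsto_at hs).comp hφ).sub (hxs.comp hφ)
  have hcont : Continuous fun p : ℝ × ℝ => |p.1| ^ ν :=
    (Real.continuous_rpow_const hν).comp (continuous_abs.comp continuous_fst)
  have hweight : TendstoUniformlyOn (fun n τ => |(ys (φ n) τ).1| ^ ν) (fun τ => |(y τ).1| ^ ν)
      atTop (Icc 0 T) := fun u hu => hφ.eventually
    ((hS.uniformContinuousOn_of_continuous hcont.continuousOn).comp_tendstoUniformlyOn hysS hyS
      hy u hu)
  refine ⟨_, mem_Gamma_of_Lp hν hT hyc hyS z₁ z₂ (fun s hs => ?_) (fun s hs => ?_)⟩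
  · have hlim := tendsto_intervalIntegral_mul_of_weak (fun n => ha (φ n))
      (fun w => (hz₁ w).comp hφ₂.tendsto_atTop) (fun n => ha_le (φ n))
      (c := fun _ _ => 1) (fun _ => continuousOn_const) continuousOn_const
      (tendsto_const_nhds.tendstoUniformlyOn_const _) hs
    have heq : ∀ n, ∫ τ in 0..s, (as n τ).1 = (ys n s - xs n).1 := fun n =>
      ((hΓ n).1.fst_sub hs).symm
    simp only [one_mul, heq] at hlim
    linarith [tendsto_nhds_unique ((hendpoint s hs).fst_nhds) hlim, Prod.fst_sub (y s) x]
  · have hlim := tendsto_intervalIntegral_mul_of_weak (fun n => hb (φ n)) hz₂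
      (fun n => hb_le (φ n)) (fun n => hcont.comp_continuousOn (hys (φ n)))
      (hcont.comp_continuousOn hyc) hweight hs
    have heq : ∀ n, ∫ τ in 0..s, |(ys n τ).1| ^ ν * (as n τ).2 = (ys n s - xs n).2 := fun n =>
      ((hΓ n).1.snd_sub hs).symm
    simp only [Function.comp_apply, heq] at hlim
    linarith [tendsto_nhds_unique ((hendpoint s hs).snd_nhds) hlim, Prod.snd_sub (y s) x]

end Compactness

theorem unreachable_implies_closed_graph_general
    (T ν : ℝ) (hT : 0 < T) (hν : 0 < ν)
    (S : Set (ℝ × ℝ)) (hSc : IsCompact S)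
    (l : ℝ × ℝ → ℝ → ℝ) (g : ℝ × ℝ → ℝ)
    (hl : ContinuousOn (fun q : (ℝ × ℝ) × ℝ => l q.1 q.2) (S ×ˢ Icc 0 T))
    (hg : ContinuousOn g S)
    (x : ℝ × ℝ) (hx : x ∈ S)
    (hun : Unreachable ν S T x) :
    ClosedGraphAt ν S l g 0 T x := by
  intro xs ys as y hxsS hxs hopt hy
  obtain ⟨M, hM⟩ := (hSc.prod isCompact_Icc).exists_bound_of_continuousOn hl
  obtain ⟨Mg, hMg⟩ := hSc.exists_bound_of_continuousOn hg
  obtain ⟨α, hα⟩ := exists_mem_Gamma_of_tendstoUniformlyOn hν.le hSc hT.le hxs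
    (fun n => (hopt n).1)
    (fun n => integral_sq2_le_of_mem_GammaOpt hT.le hl hM hMg (hxsS n) (hopt n)) hy
  exact ⟨_, hun.mem_GammaOpt hT.le hx hl (hun.eqOn_of_mem_Gamma hT.le hα)⟩

/-- if `x` is unreachable then `Γ^{opt}[x]` has the closed graph property. -/
theorem unreachable_implies_closed_graph
    (T ν : ℝ) (hT : 0 < T) (hν : 0 < ν)
    (S : Set (ℝ × ℝ)) (hSc : IsCompact S) (hSne : S.Nonempty)
    (l : ℝ × ℝ → ℝ → ℝ) (g : ℝ × ℝ → ℝ)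
    (hl : ContinuousOn (fun q : (ℝ × ℝ) × ℝ => l q.1 q.2) (S ×ˢ Icc 0 T))
    (hg : ContinuousOn g S)
    (x : ℝ × ℝ) (hx : x ∈ S)
    (hun : Unreachable ν S T x) :
    ClosedGraphAt ν S l g 0 T x :=
  unreachable_implies_closed_graph_general T ν hT hν S hSc l g hl hg x hx hun
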